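/- arXiv:1502.04231 — 2 statements merged into one kernel-verified Lean document; each statement's English description precedes it below -/
import Mathlib

section
/- Let X = (x₀, x₁, x₂) ∈ ℝ³ with 0 < x₀ < x₁ < x₂ and x₀, x₁, x₂ linearly independent over ℚ. Suppose a run of the Smallest Vector Algorithm started at X satisfies X⁽ˢ⁺ᵖ⁾ = λ · X⁽ˢ⁾ for some natural numbers s and p with p > 0 and some real number λ. Then λ cannot be a quadratic real number, i.e. λ is not algebraic of degree 2 over ℚ. -/
/-!
Every step of the Smallest Vector Algorithm subtracts one column of `G⁽ˢ⁾` from another and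
permutes the columns, so the `ℚ`-span of the entries of `X⁽ˢ⁾` is, for every `s`, the span `V` of
`x₀, x₁, x₂`, which is 3-dimensional. The loop relation `X⁽ˢ⁺ᵖ⁾ = λ X⁽ˢ⁾` makes `V` stable under
multiplication by `λ`, so `V` is a vector space over `ℚ(λ)` and `[ℚ(λ) : ℚ]` divides `3`.
-/

open Filter InnerProductGeometry Polynomial

noncomputable section

abbrev E3 := EuclideanSpace ℝ (Fin 3)

/-- Identify a plain function `Fin 3 → ℝ` with a point of Euclidean 3-space. -/
def toE3 (v : Fin 3 → ℝ) : E3 := (WithLp.equiv 2 (Fin 3 → ℝ)).symm v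

/-- The point of Euclidean 3-space attached to an integer vector. -/
def toR3 (v : Fin 3 → ℤ) : E3 := toE3 fun i => (v i : ℝ)

/-- Orthogonal projection of `h` onto the line `ℝ·X` (written `h''`). -/
def projL (X h : E3) : E3 := ((inner ℝ h X : ℝ) / ‖X‖ ^ 2) • X

/-- Orthogonal projection of `h` onto the plane `X^⊥` (written `h'`). -/
def projPl (X h : E3) : E3 := h - projL X h

/-- `gᵢ'` : projection of the `i`-th column onto the plane `X^⊥`. -/
def colP (X : E3) (g : Fin 3 → Fin 3 → ℤ) (i : Fin 3) : E3 := projPl X (toR3 (g i))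

/-- `gᵢ''` : projection of the `i`-th column onto the line `ℝ·X`. -/
def colL (X : E3) (g : Fin 3 → Fin 3 → ℤ) (i : Fin 3) : E3 := projL X (toR3 (g i))

def max3 (f : Fin 3 → ℝ) : ℝ := max (f 0) (max (f 1) (f 2))

def min3 (f : Fin 3 → ℝ) : ℝ := min (f 0) (min (f 1) (f 2))

/-- One step of the Smallest Vector Algorithm: from the columns `g` to the columns `g'`. -/
def SVAStep (X : E3) (g g' : Fin 3 → Fin 3 → ℤ) : Prop :=
  ∃ f : Fin 3 → Fin 3 → ℤ,
    ((min3 ![‖colP X g 1 - colP X g 0‖, ‖colP X g 2 - colP X g 1‖, ‖colP X g 2 - colP X g 0‖]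
        = ‖colP X g 1 - colP X g 0‖ ∧ f = ![g 0, g 1 - g 0, g 2]) ∨
     (min3 ![‖colP X g 1 - colP X g 0‖, ‖colP X g 2 - colP X g 1‖, ‖colP X g 2 - colP X g 0‖]
        = ‖colP X g 2 - colP X g 1‖ ∧ f = ![g 0, g 1, g 2 - g 1]) ∨
     (min3 ![‖colP X g 1 - colP X g 0‖, ‖colP X g 2 - colP X g 1‖, ‖colP X g 2 - colP X g 0‖]
        = ‖colP X g 2 - colP X g 0‖ ∧ f = ![g 0, g 1, g 2 - g 0])) ∧
    ∃ σ : Equiv.Perm (Fin 3), (∀ i, g' i = f (σ i)) ∧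
      ‖colL X g' 0‖ ≤ ‖colL X g' 1‖ ∧ ‖colL X g' 1‖ ≤ ‖colL X g' 2‖

/-- A run of the Smallest Vector Algorithm started at `X`: `g s i` is the `i`-th column of `G⁽ˢ⁾`. -/
def IsSVARun (X : E3) (g : ℕ → Fin 3 → Fin 3 → ℤ) : Prop :=
  (∀ i j, g 0 i j = if i = j then 1 else 0) ∧ ∀ s, SVAStep X (g s) (g (s + 1))

/-- The cofactor vector `X⁽ˢ⁾ = ᵀG⁽ˢ⁾·X`. -/
def cofVec (X : E3) (g : Fin 3 → Fin 3 → ℤ) (i : Fin 3) : ℝ := (inner ℝ (toR3 (g i)) X : ℝ)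

open IntermediateField

def Submodule.mulStabilizer {R A : Type*} [CommSemiring R] [Semiring A] [Algebra R A]
    (V : Submodule R A) : Subalgebra R A where
  carrier := {k | ∀ v ∈ V, k * v ∈ V}
  mul_mem' ha hb v hv := by rw [mul_assoc]; exact ha _ (hb v hv)
  add_mem' ha hb v hv := by rw [add_mul]; exact V.add_mem (ha v hv) (hb v hv)
  algebraMap_mem' r v hv := by rw [← Algebra.smul_def]; exact V.smul_mem r hv

theorem natDegree_minpoly_dvd_finrank {F L : Type*} [Field F] [Field L] [Algebra F L] {x : L}
    (hx : IsIntegral F x) (V : Submodule F L) (hV : ∀ v ∈ V, x * v ∈ V) :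
    (minpoly F x).natDegree ∣ Module.finrank F V := by
  have hle : F⟮x⟯.toSubalgebra ≤ V.mulStabilizer := by
    rw [adjoin_simple_toSubalgebra_of_isAlgebraic hx.isAlgebraic]
    exact Algebra.adjoin_le (Set.singleton_subset_iff.mpr hV)
  let W : Submodule F⟮x⟯ L := { V with smul_mem' := fun k v hv => hle k.2 v hv }
  have hW : Module.finrank F W = Module.finrank F V := rfl
  rw [← adjoin.finrank hx, ← hW, ← Module.finrank_mul_finrank F F⟮x⟯ W]
  exact dvd_mul_right _ _

theorem Submodule.mul_mem_of_span_range_mul_le {R A ι : Type*} [CommSemiring R] [Semiring A]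
    [Algebra R A] {u : ι → A} {x : A}
    (hu : span R (Set.range fun i => x * u i) ≤ span R (Set.range u)) :
    ∀ v ∈ span R (Set.range u), x * v ∈ span R (Set.range u) := by
  intro v hv
  have hmap : (span R (Set.range u)).map (LinearMap.mulLeft R x) =
      span R (Set.range fun i => x * u i) := by
    rw [map_span, ← Set.range_comp]; rfl
  exact hu (hmap ▸ mem_map_of_mem hv)

lemma toR3_sub (a b : Fin 3 → ℤ) : toR3 (a - b) = toR3 a - toR3 b := by
  ext i; simp [toR3, toE3]

lemma cofVec_update_sub (X : E3) (g : Fin 3 → Fin 3 → ℤ) (i j : Fin 3) :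
    cofVec X (Function.update g j (g j - g i)) =
      Function.update (cofVec X g) j (cofVec X g j - cofVec X g i) := by
  funext k
  rw [cofVec, Function.apply_update (fun _ v => (inner ℝ (toR3 v) X : ℝ))]
  simp only [toR3_sub, inner_sub_left]
  rfl

lemma span_cofVec_update_sub (X : E3) (g : Fin 3 → Fin 3 → ℤ) {i j : Fin 3} (hij : i ≠ j) :
    Submodule.span ℚ (Set.range (cofVec X (Function.update g j (g j - g i)))) =
      Submodule.span ℚ (Set.range (cofVec X g)) := by
  simpa only [cofVec_update_sub, one_smul] using
    Submodule.span_range_update_sub_smul hij (cofVec X g) (1 : ℚ)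

lemma SVAStep.span_cofVec {X : E3} {g g' : Fin 3 → Fin 3 → ℤ} (h : SVAStep X g g') :
    Submodule.span ℚ (Set.range (cofVec X g')) = Submodule.span ℚ (Set.range (cofVec X g)) := by
  obtain ⟨f, hf, σ, hσ, -⟩ := h
  have hperm : cofVec X g' = cofVec X f ∘ σ := by
    funext i; simp only [cofVec, Function.comp_apply, hσ i]
  rw [hperm, σ.surjective.range_comp]
  rcases hf with ⟨-, rfl⟩ | ⟨-, rfl⟩ | ⟨-, rfl⟩
  · convert span_cofVec_update_sub X g (show (0 : Fin 3) ≠ 1 by decide) using 4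
    funext k; fin_cases k <;> rfl
  · convert span_cofVec_update_sub X g (show (1 : Fin 3) ≠ 2 by decide) using 4
    funext k; fin_cases k <;> rfl
  · convert span_cofVec_update_sub X g (show (0 : Fin 3) ≠ 2 by decide) using 4
    funext k; fin_cases k <;> rfl

lemma IsSVARun.span_cofVec {X : E3} {g : ℕ → Fin 3 → Fin 3 → ℤ} (hg : IsSVARun X g) (t : ℕ) :
    Submodule.span ℚ (Set.range (cofVec X (g t))) = Submodule.span ℚ (Set.range fun i => X i) := by
  induction t with
  | zero =>
    congr 2
    funext i
    have : toR3 (g 0 i) = EuclideanSpace.single i 1 := by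
      ext j; simp [toR3, toE3, hg.1, eq_comm]
    rw [cofVec, this, EuclideanSpace.inner_single_left, map_one, one_mul]
  | succ t ih => rw [(hg.2 t).span_cofVec, ih]

theorem sva_loop_not_quadratic_general (Y : E3)
    (hind : LinearIndependent ℚ fun i : Fin 3 => Y i)
    (g : ℕ → Fin 3 → Fin 3 → ℤ) (hg : IsSVARun Y g)
    (s p : ℕ) (lam : ℝ)
    (hloop : ∀ i, cofVec Y (g (s + p)) i = lam * cofVec Y (g s) i) :
    ¬ (IsAlgebraic ℚ lam ∧ (minpoly ℚ lam).natDegree = 2) := by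
  rintro ⟨halg, hdeg⟩
  have hstable : ∀ v ∈ Submodule.span ℚ (Set.range (cofVec Y (g s))),
      lam * v ∈ Submodule.span ℚ (Set.range (cofVec Y (g s))) := by
    apply Submodule.mul_mem_of_span_range_mul_le
    simp only [← hloop, hg.span_cofVec, le_refl]
  have hdim : Module.finrank ℚ (Submodule.span ℚ (Set.range (cofVec Y (g s)))) = 3 := by
    rw [hg.span_cofVec, finrank_span_eq_card hind, Fintype.card_fin]
  have := natDegree_minpoly_dvd_finrank halg.isIntegral _ hstable
  rw [hdeg, hdim] at this
  omega

/-- Lemma 3: in a loop, the ratio `λ` cannot be a quadratic number. -/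
theorem sva_loop_not_quadratic (Y : E3) (h0 : 0 < Y 0) (h01 : Y 0 < Y 1) (h12 : Y 1 < Y 2)
    (hind : LinearIndependent ℚ fun i : Fin 3 => Y i)
    (g : ℕ → Fin 3 → Fin 3 → ℤ) (hg : IsSVARun Y g)
    (s p : ℕ) (hp : 0 < p) (lam : ℝ)
    (hloop : ∀ i, cofVec Y (g (s + p)) i = lam * cofVec Y (g s) i) :
    ¬ (IsAlgebraic ℚ lam ∧ (minpoly ℚ lam).natDegree = 2) :=
  sva_loop_not_quadratic_general Y hind g hg s p lam hloop

end
end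

section
/- Let X = (x₀, x₁, x₂) ∈ ℝ³ with 0 < x₀ < x₁ < x₂ and x₀, x₁, x₂ linearly independent over ℚ, and consider any run of the Smallest Vector Algorithm started at X. Suppose s ∈ T satisfies ‖g_I'⁽ˢ⁾‖ ≤ 0.1·‖g_II'⁽ˢ⁾‖ and ∠(g_III'⁽ˢ⁾, g_II'⁽ˢ⁾) ≥ 30π/31. Then: 15π/31 ≤ ∠(g_III'⁽ˢ⁾, g_I'⁽ˢ⁾) ≤ 17π/31; 15π/31 ≤ ∠(g_II'⁽ˢ⁾, g_I'⁽ˢ⁾) ≤ 17π/31; ‖g_II'⁽ˢ⁾‖ ≥ 0.979·‖g_III'⁽ˢ⁾‖; ‖g_II'⁽ˢ⁾ + g_III'⁽ˢ⁾‖ ≤ 0.23·‖g_III'⁽ˢ⁾‖; and ‖g_I'⁽ˢ⁾ − g_II'⁽ˢ⁾ − g_III'⁽ˢ⁾‖ ≤ 0.33·‖g_III'⁽ˢ⁾‖. -/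
open Filter InnerProductGeometry Polynomial

noncomputable section

/-!
Write `a, b, c` for `g_I', g_II', g_III'`. When `s ∈ T`, the longest vector after the step is the
difference the step created, and that difference was the shortest of the three pairwise
differences; so every difference `g_i' - g_j'` is longer than `c`. In particular
`‖c‖ < ‖b - a‖` and `‖c‖ < ‖c - a‖`, which give `2⟪c, a⟫ < ‖a‖²` and `2⟪b, a⟫ < ‖a‖²`: the short
vector `a` is almost orthogonal to `b` and `c`, and the angle upper bounds follow from the
triangle inequality for angles through `-b` and `-c`. Adding the two inequalities gives
`‖c‖² - ‖b‖² < 2‖a‖² + 2‖a‖‖b + c‖`, while the nearly opposite directions of `b` and `c` give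
`‖b + c‖² ≤ (‖c‖ - ‖b‖)² + (π/31)²‖b‖‖c‖`; together they force `‖b‖ ≥ 0.979‖c‖`, and then
`‖b + c‖` and `‖a - b - c‖` are small.
-/

namespace InnerProductGeometry

open Real

variable {V : Type*} [NormedAddCommGroup V] [InnerProductSpace ℝ V]

theorem inner_le_cos_mul_norm_mul_norm_of_le_angle {x y : V} {θ : ℝ} (hθ : 0 ≤ θ)
    (h : θ ≤ angle x y) : inner ℝ x y ≤ cos θ * (‖x‖ * ‖y‖) := by
  rw [← cos_angle_mul_norm_mul_norm]
  gcongr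
  exact cos_le_cos_of_nonneg_of_le_pi hθ (angle_le_pi x y) h

theorem lt_angle_of_inner_lt_cos_mul_norm_mul_norm {x y : V} {θ : ℝ} (hθ : θ ≤ π)
    (h : inner ℝ x y < cos θ * (‖x‖ * ‖y‖)) : θ < angle x y := by
  rw [← cos_angle_mul_norm_mul_norm] at h
  have hcos := lt_of_mul_lt_mul_right h (by positivity)
  by_contra! hle
  exact hcos.not_ge (cos_le_cos_of_nonneg_of_le_pi (angle_nonneg x y) hθ hle)

theorem norm_add_sq_le_of_pi_sub_le_angle {x y : V} {ε : ℝ} (hε : ε ≤ π)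
    (h : π - ε ≤ angle x y) : ‖x + y‖ ^ 2 ≤ (‖x‖ - ‖y‖) ^ 2 + ε ^ 2 * (‖x‖ * ‖y‖) := by
  have hinner := inner_le_cos_mul_norm_mul_norm_of_le_angle (sub_nonneg.2 hε) h
  rw [cos_pi_sub] at hinner
  have hcos : 1 - ε ^ 2 / 2 ≤ cos ε := one_sub_sq_div_two_le_cos
  have hxy : 0 ≤ ‖x‖ * ‖y‖ := by positivity
  rw [norm_add_sq_real]
  nlinarith

theorem two_mul_inner_lt_of_norm_lt_norm_sub {x y : V} (h : ‖x‖ < ‖x - y‖) :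
    2 * inner ℝ x y < ‖y‖ ^ 2 := by
  have := pow_lt_pow_left₀ h (norm_nonneg x) two_ne_zero
  rw [norm_sub_sq_real] at this
  linarith

theorem lt_angle_of_norm_lt_norm_sub {x y : V} {θ t : ℝ} (hθ : θ ≤ π) (ht : t / 2 ≤ cos θ)
    (h : ‖x‖ < ‖x - y‖) (hy : ‖y‖ ≤ t * ‖x‖) : θ < angle x y := by
  apply lt_angle_of_inner_lt_cos_mul_norm_mul_norm hθ
  have hyy : ‖y‖ ^ 2 ≤ t * (‖x‖ * ‖y‖) := by
    nlinarith [mul_le_mul_of_nonneg_right hy (norm_nonneg y)]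
  nlinarith [two_mul_inner_lt_of_norm_lt_norm_sub h, mul_le_mul_of_nonneg_right ht
    (mul_nonneg (norm_nonneg x) (norm_nonneg y))]

end InnerProductGeometry

open Real InnerProductGeometry

theorem cos_fifteen_pi_div_thirty_one_gt : (0.05 : ℝ) < cos (15 * π / 31) := by
  rw [show 15 * π / 31 = π / 2 - π / 62 by ring, cos_pi_div_two_sub]
  refine lt_trans ?_ (sin_gt_sub_cube (by positivity))
  have hcube := pow_le_pow_left₀ (by positivity) (show π / 62 ≤ 4 / 62 by linarith [pi_lt_four]) 3
  nlinarith [pi_gt_d2]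

theorem pi_div_thirty_one_sq_le : (π / 31) ^ 2 ≤ 0.0103 := by
  nlinarith [pi_lt_d4, pi_pos]

/-- With `2αS ≤ (20/19)α² + (19/20)S²` the hypotheses leave a concave quadratic in `β/γ` that is
positive on `[0, 0.979]`. -/
theorem flat_triangle_ratio_bound {α β γ S : ℝ} (hα : 0 ≤ α) (hαβ : α ≤ 0.1 * β)
    (hsum : γ ^ 2 - β ^ 2 < 2 * α ^ 2 + 2 * α * S)
    (hS : S ^ 2 ≤ (γ - β) ^ 2 + 0.0103 * (β * γ)) : 0.979 * γ ≤ β := by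
  by_contra! h
  have hβ : 0 ≤ β := by linarith
  nlinarith [sq_nonneg (20 * α - 19 * S), mul_le_mul hαβ hαβ hα (by linarith),
    mul_nonneg hβ (sub_nonneg.2 h.le)]

section FlatTriangle

variable {V : Type*} [NormedAddCommGroup V] [InnerProductSpace ℝ V] {a b c : V}

theorem sq_sub_sq_lt_of_norm_lt_norm_sub (hab : ‖c‖ < ‖b - a‖) (hac : ‖c‖ < ‖c - a‖) :
    ‖c‖ ^ 2 - ‖b‖ ^ 2 < 2 * ‖a‖ ^ 2 + 2 * ‖a‖ * ‖b + c‖ := by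
  have hb := pow_lt_pow_left₀ hab (norm_nonneg c) two_ne_zero
  rw [norm_sub_sq_real] at hb
  have hc := two_mul_inner_lt_of_norm_lt_norm_sub hac
  have hbc : -(‖b + c‖ * ‖a‖) ≤ inner ℝ (b + c) a := neg_le_of_abs_le (abs_real_inner_le_norm _ _)
  rw [inner_add_left] at hbc
  nlinarith

theorem flat_triangle_norms (hab : ‖c‖ < ‖b - a‖) (hac : ‖c‖ < ‖c - a‖) (hbc : ‖b‖ ≤ ‖c‖)
    (ha : ‖a‖ ≤ 0.1 * ‖b‖) (hcb : 30 * π / 31 ≤ angle c b) :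
    0.979 * ‖c‖ ≤ ‖b‖ ∧ ‖b + c‖ ≤ 0.23 * ‖c‖ ∧ ‖a - b - c‖ ≤ 0.33 * ‖c‖ := by
  have hS : ‖b + c‖ ^ 2 ≤ (‖c‖ - ‖b‖) ^ 2 + 0.0103 * (‖b‖ * ‖c‖) := by
    have h := norm_add_sq_le_of_pi_sub_le_angle (ε := π / 31) (by linarith [pi_pos])
      (by linarith : π - π / 31 ≤ angle c b)
    rw [add_comm, mul_comm ‖c‖] at h
    nlinarith [pi_div_thirty_one_sq_le, mul_nonneg (norm_nonneg b) (norm_nonneg c)]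
  have hratio :=
    flat_triangle_ratio_bound (norm_nonneg a) ha (sq_sub_sq_lt_of_norm_lt_norm_sub hab hac) hS
  have hsum : ‖b + c‖ ≤ 0.23 * ‖c‖ := by
    refine (pow_le_pow_iff_left₀ (norm_nonneg _) (by positivity) two_ne_zero).1 ?_
    nlinarith [norm_nonneg b]
  refine ⟨hratio, hsum, ?_⟩
  calc ‖a - b - c‖ = ‖a - (b + c)‖ := by rw [sub_sub]
    _ ≤ ‖a‖ + ‖b + c‖ := norm_sub_le _ _
    _ ≤ 0.33 * ‖c‖ := by linarith

theorem flat_triangle_angles (hab : ‖c‖ < ‖b - a‖) (hac : ‖c‖ < ‖c - a‖) (hbc : ‖b‖ ≤ ‖c‖)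
    (ha : ‖a‖ ≤ 0.1 * ‖b‖) (hcb : 30 * π / 31 ≤ angle c b) :
    (15 * π / 31 ≤ angle c a ∧ angle c a ≤ 17 * π / 31) ∧
      (15 * π / 31 ≤ angle b a ∧ angle b a ≤ 17 * π / 31) := by
  have hθ : 15 * π / 31 ≤ π := by linarith [pi_pos]
  have hcos : 0.1 / 2 ≤ cos (15 * π / 31) := by linarith [cos_fifteen_pi_div_thirty_one_gt]
  have hca : 15 * π / 31 < angle c a :=
    lt_angle_of_norm_lt_norm_sub hθ hcos hac (by linarith)
  have hba : 15 * π / 31 < angle b a :=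
    lt_angle_of_norm_lt_norm_sub hθ hcos (hbc.trans_lt hab) ha
  have hca' := angle_le_angle_add_angle c (-b) a
  have hba' := angle_le_angle_add_angle b (-c) a
  rw [angle_neg_right, angle_neg_left] at hca' hba'
  rw [angle_comm b c] at hba'
  exact ⟨⟨hca.le, by linarith⟩, hba.le, by linarith⟩

end FlatTriangle

theorem le_max3 (f : Fin 3 → ℝ) (i : Fin 3) : f i ≤ max3 f := by
  fin_cases i
  · exact le_max_left _ _
  · exact (le_max_left _ _).trans (le_max_right _ _)
  · exact (le_max_right _ _).trans (le_max_right _ _)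

theorem max3_le {f : Fin 3 → ℝ} {m : ℝ} (h : ∀ i, f i ≤ m) : max3 f ≤ m :=
  max_le (h 0) (max_le (h 1) (h 2))

theorem min3_le (f : Fin 3 → ℝ) (i : Fin 3) : min3 f ≤ f i := by
  fin_cases i
  · exact min_le_left _ _
  · exact (min_le_right _ _).trans (min_le_left _ _)
  · exact (min_le_right _ _).trans (min_le_right _ _)

theorem projPl_toR3_sub (X : E3) (u v : Fin 3 → ℤ) :
    projPl X (toR3 (u - v)) = projPl X (toR3 u) - projPl X (toR3 v) := by
  have h : toR3 (u - v) = toR3 u - toR3 v := by ext i; simp [toR3, toE3]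
  rw [h, projPl, projPl, projPl, projL, projL, projL, inner_sub_left, sub_div, sub_smul]
  abel

namespace SVAStep

variable {X : E3} {g g' : Fin 3 → Fin 3 → ℤ}

theorem norm_colP_le (h : SVAStep X g g') (i : Fin 3) :
    ‖colP X g' i‖ ≤ max (max3 fun j => ‖colP X g j‖) (min3
      ![‖colP X g 1 - colP X g 0‖, ‖colP X g 2 - colP X g 1‖, ‖colP X g 2 - colP X g 0‖]) := by
  obtain ⟨f, hf, σ, hσ, -⟩ := h
  rw [colP, hσ]
  rcases hf with ⟨hmin, rfl⟩ | ⟨hmin, rfl⟩ | ⟨hmin, rfl⟩ <;> rw [hmin] <;>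
    generalize σ i = k <;> fin_cases k <;>
    simp only [Fin.zero_eta, Fin.mk_one, Fin.reduceFinMk, Matrix.cons_val] <;>
    first
      | (rw [projPl_toR3_sub]; exact le_max_right _ _)
      | exact le_max_of_le_left (le_max3 (fun j => ‖colP X g j‖) _)

theorem max3_lt_norm_sub (h : SVAStep X g g')
    (hT : (max3 fun i => ‖colP X g i‖) < max3 fun i => ‖colP X g' i‖) {i j : Fin 3} (hij : i ≠ j) :
    (max3 fun k => ‖colP X g k‖) < ‖colP X g i - colP X g j‖ := by
  have hlt := hT.trans_le (max3_le h.norm_colP_le)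
  have hmin := (lt_max_iff.1 hlt).resolve_left (lt_irrefl _)
  have h10 := hmin.trans_le (min3_le _ 0)
  have h21 := hmin.trans_le (min3_le _ 1)
  have h20 := hmin.trans_le (min3_le _ 2)
  simp only [Fin.isValue, Matrix.cons_val] at h10 h21 h20
  fin_cases i <;> fin_cases j <;>
    first | exact absurd rfl hij | assumption | (rw [norm_sub_rev]; assumption)

end SVAStep

theorem sva_flat_triangle_general (Y : E3)
    (g : ℕ → Fin 3 → Fin 3 → ℤ) (hg : IsSVARun Y g) (s : ℕ)
    (σ : Equiv.Perm (Fin 3))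
    (hσ : ‖colP Y (g s) (σ 0)‖ ≤ ‖colP Y (g s) (σ 1)‖ ∧
          ‖colP Y (g s) (σ 1)‖ ≤ ‖colP Y (g s) (σ 2)‖)
    (hT : (max3 fun i => ‖colP Y (g s) i‖) < max3 fun i => ‖colP Y (g (s + 1)) i‖)
    (hflat1 : ‖colP Y (g s) (σ 0)‖ ≤ 0.1 * ‖colP Y (g s) (σ 1)‖)
    (hflat2 : 30 * Real.pi / 31 ≤
      InnerProductGeometry.angle (colP Y (g s) (σ 2)) (colP Y (g s) (σ 1))) :
    (15 * Real.pi / 31 ≤ InnerProductGeometry.angle (colP Y (g s) (σ 2)) (colP Y (g s) (σ 0)) ∧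
      InnerProductGeometry.angle (colP Y (g s) (σ 2)) (colP Y (g s) (σ 0)) ≤ 17 * Real.pi / 31) ∧
    (15 * Real.pi / 31 ≤ InnerProductGeometry.angle (colP Y (g s) (σ 1)) (colP Y (g s) (σ 0)) ∧
      InnerProductGeometry.angle (colP Y (g s) (σ 1)) (colP Y (g s) (σ 0)) ≤ 17 * Real.pi / 31) ∧
    0.979 * ‖colP Y (g s) (σ 2)‖ ≤ ‖colP Y (g s) (σ 1)‖ ∧
    ‖colP Y (g s) (σ 1) + colP Y (g s) (σ 2)‖ ≤ 0.23 * ‖colP Y (g s) (σ 2)‖ ∧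
    ‖colP Y (g s) (σ 0) - colP Y (g s) (σ 1) - colP Y (g s) (σ 2)‖
      ≤ 0.33 * ‖colP Y (g s) (σ 2)‖ := by
  have hlong : ∀ {i j : Fin 3}, i ≠ j →
      ‖colP Y (g s) (σ 2)‖ < ‖colP Y (g s) (σ i) - colP Y (g s) (σ j)‖ := fun hij =>
    (le_max3 _ (σ 2)).trans_lt ((hg.2 s).max3_lt_norm_sub hT (σ.injective.ne hij))
  have hab := hlong (i := 1) (j := 0) (by decide)
  have hac := hlong (i := 2) (j := 0) (by decide)
  obtain ⟨hca, hba⟩ := flat_triangle_angles hab hac hσ.2 hflat1 hflat2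
  exact ⟨hca, hba, flat_triangle_norms hab hac hσ.2 hflat1 hflat2⟩

/-- Flat Triangle Lemma. -/
theorem sva_flat_triangle (Y : E3) (h0 : 0 < Y 0) (h01 : Y 0 < Y 1) (h12 : Y 1 < Y 2)
    (hind : LinearIndependent ℚ fun i : Fin 3 => Y i)
    (g : ℕ → Fin 3 → Fin 3 → ℤ) (hg : IsSVARun Y g) (s : ℕ)
    (σ : Equiv.Perm (Fin 3))
    (hσ : ‖colP Y (g s) (σ 0)‖ ≤ ‖colP Y (g s) (σ 1)‖ ∧
          ‖colP Y (g s) (σ 1)‖ ≤ ‖colP Y (g s) (σ 2)‖)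
    (hT : (max3 fun i => ‖colP Y (g s) i‖) < max3 fun i => ‖colP Y (g (s + 1)) i‖)
    (hflat1 : ‖colP Y (g s) (σ 0)‖ ≤ 0.1 * ‖colP Y (g s) (σ 1)‖)
    (hflat2 : 30 * Real.pi / 31 ≤
      InnerProductGeometry.angle (colP Y (g s) (σ 2)) (colP Y (g s) (σ 1))) :
    (15 * Real.pi / 31 ≤ InnerProductGeometry.angle (colP Y (g s) (σ 2)) (colP Y (g s) (σ 0)) ∧
      InnerProductGeometry.angle (colP Y (g s) (σ 2)) (colP Y (g s) (σ 0)) ≤ 17 * Real.pi / 31) ∧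
    (15 * Real.pi / 31 ≤ InnerProductGeometry.angle (colP Y (g s) (σ 1)) (colP Y (g s) (σ 0)) ∧
      InnerProductGeometry.angle (colP Y (g s) (σ 1)) (colP Y (g s) (σ 0)) ≤ 17 * Real.pi / 31) ∧
    0.979 * ‖colP Y (g s) (σ 2)‖ ≤ ‖colP Y (g s) (σ 1)‖ ∧
    ‖colP Y (g s) (σ 1) + colP Y (g s) (σ 2)‖ ≤ 0.23 * ‖colP Y (g s) (σ 2)‖ ∧
    ‖colP Y (g s) (σ 0) - colP Y (g s) (σ 1) - colP Y (g s) (σ 2)‖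
      ≤ 0.33 * ‖colP Y (g s) (σ 2)‖ :=
  sva_flat_triangle_general Y g hg s σ hσ hT hflat1 hflat2

end
end
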